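/- arXiv:1307.6126 — 5 statements merged into one kernel-verified Lean document; each statement's English description precedes it below -/
import Mathlib

section
/- Let L be a finite lattice, a ≤ b in L, and let q be a prime interval of L. Then q is collapsed by con_L(a, b) if and only if [a, b] is congruence-projective to q; in fact, if q is collapsed by con_L(a, b), then there is a prime interval p contained in [a, b] such that p ⇛ q. -/
namespace ForkCongruence

/-- A congruence of a lattice: an equivalence relation compatible with `⊔` and `⊓`. -/
structure LatCon (K : Type*) [Lattice K] where
  rel : K → K → Prop
  refl : ∀ x, rel x x
  symm : ∀ {x y}, rel x y → rel y x
  trans : ∀ {x y z}, rel x y → rel y z → rel x z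
  sup_comp : ∀ {a b c d}, rel a b → rel c d → rel (a ⊔ c) (b ⊔ d)
  inf_comp : ∀ {a b c d}, rel a b → rel c d → rel (a ⊓ c) (b ⊓ d)

namespace LatCon

variable {K : Type*} [Lattice K]

theorem rel_ext {θ ψ : LatCon K} (h : θ.rel = ψ.rel) : θ = ψ := by
  cases θ; cases ψ; cases h; rfl

instance : PartialOrder (LatCon K) where
  le θ ψ := ∀ ⦃x y⦄, θ.rel x y → ψ.rel x y
  le_refl _ _ _ h := h
  le_trans _ _ _ h₁ h₂ _ _ h := h₂ (h₁ h)
  le_antisymm θ ψ h₁ h₂ :=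
    rel_ext (by funext x y; exact propext ⟨fun h => h₁ h, fun h => h₂ h⟩)

/-- The smallest lattice congruence containing a binary relation. -/
def gen (s : K → K → Prop) : LatCon K where
  rel x y := ∀ θ : LatCon K, (∀ a b, s a b → θ.rel a b) → θ.rel x y
  refl x _ _ := LatCon.refl _ x
  symm h θ hs := θ.symm (h θ hs)
  trans h₁ h₂ θ hs := θ.trans (h₁ θ hs) (h₂ θ hs)
  sup_comp h₁ h₂ θ hs := θ.sup_comp (h₁ θ hs) (h₂ θ hs)
  inf_comp h₁ h₂ θ hs := θ.inf_comp (h₁ θ hs) (h₂ θ hs)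

instance : SemilatticeSup (LatCon K) where
  sup θ ψ := gen (fun x y => θ.rel x y ∨ ψ.rel x y)
  le_sup_left θ ψ x y h χ hχ := hχ x y (Or.inl h)
  le_sup_right θ ψ x y h χ hχ := hχ x y (Or.inr h)
  sup_le θ ψ χ h₁ h₂ x y h := h χ (fun a b hab => hab.elim (fun w => h₁ w) (fun w => h₂ w))

instance : SemilatticeInf (LatCon K) where
  inf θ ψ :=
    { rel := fun x y => θ.rel x y ∧ ψ.rel x y
      refl := fun x => ⟨θ.refl x, ψ.refl x⟩
      symm := fun h => ⟨θ.symm h.1, ψ.symm h.2⟩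
      trans := fun h₁ h₂ => ⟨θ.trans h₁.1 h₂.1, ψ.trans h₁.2 h₂.2⟩
      sup_comp := fun h₁ h₂ => ⟨θ.sup_comp h₁.1 h₂.1, ψ.sup_comp h₁.2 h₂.2⟩
      inf_comp := fun h₁ h₂ => ⟨θ.inf_comp h₁.1 h₂.1, ψ.inf_comp h₁.2 h₂.2⟩ }
  inf_le_left _ _ _ _ h := h.1
  inf_le_right _ _ _ _ h := h.2
  le_inf _ _ _ h₁ h₂ _ _ h := ⟨h₁ h, h₂ h⟩

instance : Lattice (LatCon K) :=
  { (inferInstance : SemilatticeSup (LatCon K)),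
    (inferInstance : SemilatticeInf (LatCon K)) with }

instance : OrderBot (LatCon K) where
  bot :=
    { rel := Eq
      refl := fun _ => rfl
      symm := Eq.symm
      trans := Eq.trans
      sup_comp := fun h₁ h₂ => by rw [h₁, h₂]
      inf_comp := fun h₁ h₂ => by rw [h₁, h₂] }
  bot_le θ x y h := h ▸ θ.refl x

/-- The principal congruence `con(a, b)`: the smallest congruence collapsing `a` and `b`. -/
def conOf (a b : K) : LatCon K := gen (fun x y => x = a ∧ y = b)

/-- The restriction of a congruence of `K` to a sublattice `L`. -/
def restrict (θ : LatCon K) (L : Sublattice K) : LatCon L where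
  rel x y := θ.rel ↑x ↑y
  refl x := θ.refl ↑x
  symm h := θ.symm h
  trans h₁ h₂ := θ.trans h₁ h₂
  sup_comp {a b c d} h₁ h₂ := by
    show θ.rel ↑(a ⊔ c) ↑(b ⊔ d)
    rw [Sublattice.coe_sup, Sublattice.coe_sup]
    exact θ.sup_comp h₁ h₂
  inf_comp {a b c d} h₁ h₂ := by
    show θ.rel ↑(a ⊓ c) ↑(b ⊓ d)
    rw [Sublattice.coe_inf, Sublattice.coe_inf]
    exact θ.inf_comp h₁ h₂

/-- A congruence `α` of the sublattice `L` extends to `K` if it is the restriction of some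
congruence of `K`. -/
def ExtendsTo {L : Sublattice K} (α : LatCon L) : Prop :=
  ∃ θ : LatCon K, θ.restrict L = α

/-- The minimal extension of a congruence of a sublattice `L` of `K`: the smallest congruence
of `K` containing it (viewed as a set of pairs). -/
def minExt {L : Sublattice K} (α : LatCon L) : LatCon K :=
  gen (fun x y => ∃ (hx : x ∈ L) (hy : y ∈ L), α.rel ⟨x, hx⟩ ⟨y, hy⟩)

end LatCon

/-- `K` is a congruence-preserving extension of its sublattice `L`: the restriction map is a
bijection from the congruences of `K` onto the congruences of `L`. -/
def IsCongPresExt {K : Type*} [Lattice K] (L : Sublattice K) : Prop :=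
  Function.Bijective (fun θ : LatCon K => θ.restrict L)

/-- A lattice is semimodular if `x ⊓ y ⋖ y` implies `x ⋖ x ⊔ y`. -/
def IsSemimodular (K : Type*) [Lattice K] : Prop :=
  ∀ x y : K, x ⊓ y ⋖ y → x ⋖ x ⊔ y

/-- A lattice is slim if its set of join-irreducible elements contains no three-element
antichain. -/
def IsSlim (K : Type*) [Lattice K] : Prop :=
  ¬ ∃ x y z : K, SupIrred x ∧ SupIrred y ∧ SupIrred z ∧
      ¬x ≤ y ∧ ¬y ≤ x ∧ ¬x ≤ z ∧ ¬z ≤ x ∧ ¬y ≤ z ∧ ¬z ≤ y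

/-- An SPS lattice: slim, planar (which follows from slimness together with semimodularity)
and semimodular. Finiteness is assumed separately as `[Finite K]`. -/
def IsSPS (K : Type*) [Lattice K] : Prop :=
  IsSemimodular K ∧ IsSlim K

/-- A covering square `S = {o, a_l, a_r, i}` of a lattice. -/
structure CovSquare (K : Type*) [Lattice K] where
  o : K
  al : K
  ar : K
  i : K
  al_ne_ar : al ≠ ar
  inf_eq : al ⊓ ar = o
  sup_eq : al ⊔ ar = i
  o_covby_al : o ⋖ al
  o_covby_ar : o ⋖ ar
  al_covby_i : al ⋖ i
  ar_covby_i : ar ⋖ i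

namespace CovSquare

variable {K : Type*} [Lattice K]

/-- A covering square is tight if `a_l` and `a_r` are the only lower covers of `i`. -/
def Tight (S : CovSquare K) : Prop :=
  ∀ x : K, x ⋖ S.i → x = S.al ∨ x = S.ar

/-- A covering square is wide if it is not tight. -/
def Wide (S : CovSquare K) : Prop := ¬ S.Tight

/-- A covering square is distributive if the principal ideal `↓i` is a distributive lattice. -/
def Distributive (S : CovSquare K) : Prop :=
  ∀ x y z : K, x ≤ S.i → y ≤ S.i → z ≤ S.i →
    x ⊓ (y ⊔ z) = (x ⊓ y) ⊔ (x ⊓ z)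

end CovSquare

/-- `K` together with the data below is the fork extension `L[S]` of the sublattice `L` of `K`
at the covering square `S` of `L`. The elements `xl k, yl k, zl k` represent
`x_{l,k+1}, y_{l,k+1}, z_{l,k+1}` of the construction (`0`-based indexing), and similarly
on the right. -/
structure ForkExtension (K : Type*) [Lattice K] (L : Sublattice K) (S : CovSquare L) where
  n : ℕ
  m : ℕ
  npos : 0 < n
  mpos : 0 < m
  t : K
  zl : ℕ → K
  zr : ℕ → K
  xl : ℕ → L
  yl : ℕ → L
  xr : ℕ → L
  yr : ℕ → L
  xl_zero : xl 0 = S.al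
  yl_zero : yl 0 = S.o
  xr_zero : xr 0 = S.ar
  yr_zero : yr 0 = S.o
  -- the successive covering squares `{y_{l,k+1}, x_{l,k+1}, y_{l,k}, x_{l,k}}` in `L`
  xl_succ_covby : ∀ k, k + 1 < n → xl (k + 1) ⋖ xl k
  yl_succ_covby : ∀ k, k + 1 < n → yl (k + 1) ⋖ yl k
  yl_covby_xl : ∀ k, k < n → yl k ⋖ xl k
  xl_succ_ne_yl : ∀ k, k + 1 < n → xl (k + 1) ≠ yl k
  xl_inf_yl : ∀ k, k + 1 < n → xl (k + 1) ⊓ yl k = yl (k + 1)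
  xl_sup_yl : ∀ k, k + 1 < n → xl (k + 1) ⊔ yl k = xl k
  -- `n` is largest possible
  left_max : ¬ ∃ x : L, x ⋖ xl (n - 1) ∧ x ≠ yl (n - 1) ∧
      x ⊓ yl (n - 1) ⋖ x ∧ x ⊓ yl (n - 1) ⋖ yl (n - 1) ∧ x ⊔ yl (n - 1) = xl (n - 1)
  -- the same on the right
  xr_succ_covby : ∀ k, k + 1 < m → xr (k + 1) ⋖ xr k
  yr_succ_covby : ∀ k, k + 1 < m → yr (k + 1) ⋖ yr k
  yr_covby_xr : ∀ k, k < m → yr k ⋖ xr k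
  xr_succ_ne_yr : ∀ k, k + 1 < m → xr (k + 1) ≠ yr k
  xr_inf_yr : ∀ k, k + 1 < m → xr (k + 1) ⊓ yr k = yr (k + 1)
  xr_sup_yr : ∀ k, k + 1 < m → xr (k + 1) ⊔ yr k = xr k
  right_max : ¬ ∃ x : L, x ⋖ xr (m - 1) ∧ x ≠ yr (m - 1) ∧
      x ⊓ yr (m - 1) ⋖ x ∧ x ⊓ yr (m - 1) ⋖ yr (m - 1) ∧ x ⊔ yr (m - 1) = xr (m - 1)
  -- the new elements
  t_not_mem : t ∉ L
  zl_not_mem : ∀ k, k < n → zl k ∉ L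
  zr_not_mem : ∀ k, k < m → zr k ∉ L
  mem_or_new : ∀ x : K, x ∈ L ∨ x = t ∨ (∃ k < n, x = zl k) ∨ (∃ k < m, x = zr k)
  -- `{o, z_{l,1}, z_{r,1}, a_l, a_r, t, i}` is a sublattice isomorphic to `S7`
  zl_sup_zr : zl 0 ⊔ zr 0 = t
  zl_zero_covby_t : zl 0 ⋖ t
  zr_zero_covby_t : zr 0 ⋖ t
  t_covby_i : t ⋖ (S.i : K)
  -- the chains `z_{l,1} ≻ ⋯ ≻ z_{l,n}` and `z_{r,1} ≻ ⋯ ≻ z_{r,m}`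
  zl_succ_covby : ∀ k, k + 1 < n → zl (k + 1) ⋖ zl k
  zr_succ_covby : ∀ k, k + 1 < m → zr (k + 1) ⋖ zr k
  -- `y_{l,k} ⋖ z_{l,k} ⋖ x_{l,k}` in `K`, and similarly on the right
  yl_covby_zl : ∀ k, k < n → (yl k : K) ⋖ zl k
  zl_covby_xl : ∀ k, k < n → zl k ⋖ (xl k : K)
  yr_covby_zr : ∀ k, k < m → (yr k : K) ⋖ zr k
  zr_covby_xr : ∀ k, k < m → zr k ⋖ (xr k : K)

namespace ForkExtension

variable {K : Type*} [Lattice K] {L : Sublattice K} {S : CovSquare L}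

/-- `x_{l,k+1}` is a (left) protrusion: it has at least three lower covers in `L`. -/
def ProtL (F : ForkExtension K L S) (k : ℕ) : Prop :=
  k < F.n ∧ ∃ u v w : L, u ≠ v ∧ u ≠ w ∧ v ≠ w ∧
    u ⋖ F.xl k ∧ v ⋖ F.xl k ∧ w ⋖ F.xl k

/-- `x_{r,k+1}` is a (right) protrusion: it has at least three lower covers in `L`. -/
def ProtR (F : ForkExtension K L S) (k : ℕ) : Prop :=
  k < F.m ∧ ∃ u v w : L, u ≠ v ∧ u ≠ w ∧ v ≠ w ∧
    u ⋖ F.xr k ∧ v ⋖ F.xr k ∧ w ⋖ F.xr k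

end ForkExtension




/-- `(a, b)` is congruence-perspective to `(c, d)`: up-perspective (`a ≤ c` and `b ⊔ c = d`)
or down-perspective (`d ≤ b` and `a ⊓ d = c`). -/
def CPersp {K : Type*} [Lattice K] (p q : K × K) : Prop :=
  (p.1 ≤ q.1 ∧ p.2 ⊔ q.1 = q.2) ∨ (q.2 ≤ p.2 ∧ p.1 ⊓ q.2 = q.1)

/-- `(a, b)` is congruence-projective to `(c, d)`: a finite chain of
congruence-perspectivities leads from `(a, b)` to `(c, d)`. -/
def CProj {K : Type*} [Lattice K] (p q : K × K) : Prop :=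
  Relation.ReflTransGen CPersp p q

/-! Congruence-projectivity carries collapse forward, which gives one direction. For the other,
call `x` and `y` related when `[x ⊓ y, x ⊔ y]` is spanned by a chain of intervals, each
congruence-projective from a prime interval of `[a, b]`. Such intervals are closed under
`· ⊔ c` and `· ⊓ c`, so this relation is a congruence; in a finite lattice it relates `a` and `b`,
hence contains `con(a, b)`. A chain spanning a prime interval `[u, v]` has `[u, v]` itself as a
step. -/

open Relation

section Projectivity

variable {L : Type*} [Lattice L]

theorem CPersp.le {p q : L × L} (h : CPersp p q) : q.1 ≤ q.2 := by
  rcases h with ⟨-, hq⟩ | ⟨-, hq⟩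
  · exact hq ▸ le_sup_right
  · exact hq ▸ inf_le_right

theorem CProj.le_of_le {p q : L × L} (h : CProj p q) (hp : p.1 ≤ p.2) : q.1 ≤ q.2 := by
  induction h with
  | refl => exact hp
  | tail _ hstep _ => exact hstep.le

theorem LatCon.rel_of_cpersp (θ : LatCon L) {p q : L × L} (h : CPersp p q)
    (hp : θ.rel p.1 p.2) : θ.rel q.1 q.2 := by
  rcases h with ⟨hle, hq⟩ | ⟨hle, hq⟩
  · simpa only [sup_eq_right.2 hle, hq] using θ.sup_comp hp (θ.refl q.1)
  · simpa only [hq, inf_eq_right.2 hle] using θ.inf_comp hp (θ.refl q.2)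

theorem LatCon.rel_of_cproj (θ : LatCon L) {p q : L × L} (h : CProj p q)
    (hp : θ.rel p.1 p.2) : θ.rel q.1 q.2 := by
  induction h with
  | refl => exact hp
  | tail _ hstep ih => exact θ.rel_of_cpersp hstep ih

theorem cpersp_sup_right {z w : L} (h : z ≤ w) (c : L) : CPersp (z, w) (z ⊔ c, w ⊔ c) :=
  Or.inl ⟨le_sup_left, by rw [← sup_assoc, sup_eq_left.2 h]⟩

theorem cpersp_inf_right {z w : L} (h : z ≤ w) (c : L) : CPersp (z, w) (z ⊓ c, w ⊓ c) :=
  Or.inr ⟨inf_le_left, by rw [← inf_assoc, inf_eq_left.2 h]⟩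

theorem cproj_of_le_of_le_of_le {z w p q : L} (hzp : z ≤ p) (hpq : p ≤ q) (hqw : q ≤ w) :
    CProj (z, w) (p, q) :=
  .head (b := (z ⊓ q, q)) (Or.inr ⟨hqw, rfl⟩)
    (.single (Or.inl ⟨inf_le_left.trans hzp, sup_eq_left.2 hpq⟩))

end Projectivity

section Chains

variable {L : Type*} [Lattice L]

structure TranslationClosed (r : L → L → Prop) : Prop where
  sup_right : ∀ ⦃z w⦄ (c : L), r z w → r (z ⊔ c) (w ⊔ c)
  inf_right : ∀ ⦃z w⦄ (c : L), r z w → r (z ⊓ c) (w ⊓ c)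

namespace TranslationClosed

variable {r s : L → L → Prop}

theorem reflTransGen (hs : TranslationClosed s) : TranslationClosed (ReflTransGen s) where
  sup_right _ _ c h := h.lift (· ⊔ c) fun _ _ => hs.sup_right c
  inf_right _ _ c h := h.lift (· ⊓ c) fun _ _ => hs.inf_right c

theorem of_le_of_le_of_le (hr : TranslationClosed r) {z w p q : L} (h : r z w)
    (hzp : z ≤ p) (hpq : p ≤ q) (hqw : q ≤ w) : r p q := by
  have h₁ := hr.sup_right p h
  rw [sup_eq_right.2 hzp, sup_eq_left.2 (hpq.trans hqw)] at h₁
  simpa only [inf_eq_left.2 hpq, inf_eq_right.2 hqw] using hr.inf_right q h₁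

theorem reflTransGen_sup_sup (hs : TranslationClosed s) {m M m' M' : L}
    (h : ReflTransGen s m M) (h' : ReflTransGen s m' M') :
    ReflTransGen s (m ⊔ m') (M ⊔ M') := by
  have h₂ := hs.reflTransGen.sup_right M h'
  rw [sup_comm m' M, sup_comm M' M] at h₂
  exact (hs.reflTransGen.sup_right m' h).trans h₂

theorem reflTransGen_inf_inf (hs : TranslationClosed s) {m M m' M' : L}
    (h : ReflTransGen s m M) (h' : ReflTransGen s m' M') :
    ReflTransGen s (m ⊓ m') (M ⊓ M') := by
  have h₂ := hs.reflTransGen.inf_right M h'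
  rw [inf_comm m' M, inf_comm M' M] at h₂
  exact (hs.reflTransGen.inf_right m' h).trans h₂

def chainCon (hs : TranslationClosed s) : LatCon L where
  rel x y := ReflTransGen s (x ⊓ y) (x ⊔ y)
  refl x := by simp only [inf_idem, sup_idem, ReflTransGen.refl]
  symm {x y} h := by rwa [inf_comm, sup_comm]
  trans {x y z} h₁ h₂ := by
    have hmid : x ⊓ y ⊔ y ⊓ z ≤ (x ⊔ y) ⊓ (y ⊔ z) :=
      (sup_le inf_le_right inf_le_left).trans (le_inf le_sup_right le_sup_left)
    have hchain := (hs.reflTransGen_inf_inf h₁ h₂).trans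
      (hs.reflTransGen.of_le_of_le_of_le (hs.reflTransGen_sup_sup h₁ h₂) hmid inf_le_sup le_rfl)
    exact hs.reflTransGen.of_le_of_le_of_le hchain
      (le_inf (inf_le_left.trans inf_le_left) (inf_le_right.trans inf_le_right)) inf_le_sup
      (sup_le (le_sup_left.trans le_sup_left) (le_sup_right.trans le_sup_right))
  sup_comp {x y c d} h₁ h₂ :=
    hs.reflTransGen.of_le_of_le_of_le (hs.reflTransGen_sup_sup h₁ h₂)
      (le_inf (sup_le_sup inf_le_left inf_le_left) (sup_le_sup inf_le_right inf_le_right))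
      inf_le_sup (sup_sup_sup_comm x c y d).le
  inf_comp {x y c d} h₁ h₂ :=
    hs.reflTransGen.of_le_of_le_of_le (hs.reflTransGen_inf_inf h₁ h₂)
      (inf_inf_inf_comm x y c d).le inf_le_sup
      (sup_le (inf_le_inf le_sup_left le_sup_left) (inf_le_inf le_sup_right le_sup_right))

theorem chainCon_rel_iff (hs : TranslationClosed s) {x y : L} (hxy : x ≤ y) :
    (hs.chainCon).rel x y ↔ ReflTransGen s x y := by
  rw [show (hs.chainCon).rel x y = ReflTransGen s (x ⊓ y) (x ⊔ y) from rfl,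
    inf_eq_left.2 hxy, sup_eq_right.2 hxy]

end TranslationClosed

end Chains

section Order

variable {α : Type*} [PartialOrder α]

theorem reflTransGen_covBy_Icc [IsStronglyAtomic α] [WellFoundedGT α] {a b : α} (hab : a ≤ b) :
    ReflTransGen (fun x y => a ≤ x ∧ x ⋖ y ∧ y ≤ b) a b := by
  suffices ∀ x, a ≤ x → x ≤ b → ReflTransGen (fun x y => a ≤ x ∧ x ⋖ y ∧ y ≤ b) x b from
    this a le_rfl hab
  intro x
  induction x using WellFoundedGT.induction with
  | _ x ih =>
    intro hax hxb
    obtain rfl | hlt := hxb.eq_or_lt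
    · exact .refl
    · obtain ⟨c, hxc, hcb⟩ := exists_covBy_le_of_lt hlt
      exact .head ⟨hax, hxc, hcb⟩ (ih c hxc.lt (hax.trans hxc.le) hcb)

theorem rel_of_reflTransGen_of_covBy {s : α → α → Prop} (hs : ∀ ⦃x y⦄, s x y → x ≤ y)
    {u v : α} (h : ReflTransGen s u v) (huv : u ⋖ v) : s u v := by
  have hmono : ∀ {x y}, ReflTransGen s x y → x ≤ y := fun h => by
    simpa only [reflTransGen_eq_self] using ReflTransGen.mono hs _ _ h
  suffices ∀ x, ReflTransGen s x v → u ≤ x → x < v → s u v from this u h le_rfl huv.lt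
  intro x hx
  induction hx using ReflTransGen.head_induction_on with
  | refl => exact fun _ h => absurd h (lt_irrefl _)
  | @head x y hxy hyv ih =>
    intro hux hxv
    obtain rfl : x = u := (hux.eq_or_lt.resolve_right fun h => huv.2 h hxv).symm
    obtain rfl | hyv' := (hmono hyv).eq_or_lt
    · exact hxy
    · exact ih (hux.trans (hs hxy)) hyv'

end Order

section PrincipalCongruence

variable {L : Type*} [Lattice L]

theorem LatCon.rel_conOf (a b : L) : (LatCon.conOf a b).rel a b :=
  fun _ hθ => hθ a b ⟨rfl, rfl⟩

theorem LatCon.conOf_le {θ : LatCon L} {a b : L} (h : θ.rel a b) : LatCon.conOf a b ≤ θ :=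
  fun _ _ hxy => hxy θ fun _ _ ⟨hx, hy⟩ => hx ▸ hy ▸ h

def PrimeProjFrom (a b z w : L) : Prop :=
  ∃ p₁ p₂ : L, a ≤ p₁ ∧ p₁ ⋖ p₂ ∧ p₂ ≤ b ∧ CProj (p₁, p₂) (z, w)

theorem PrimeProjFrom.le {a b z w : L} (h : PrimeProjFrom a b z w) : z ≤ w := by
  obtain ⟨p₁, p₂, -, hp, -, hproj⟩ := h
  exact hproj.le_of_le hp.le

theorem translationClosed_primeProjFrom (a b : L) : TranslationClosed (PrimeProjFrom a b) where
  sup_right _ _ c h := by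
    obtain ⟨p₁, p₂, ha, hp, hb, hproj⟩ := h
    exact ⟨p₁, p₂, ha, hp, hb, hproj.tail (cpersp_sup_right (hproj.le_of_le hp.le) c)⟩
  inf_right _ _ c h := by
    obtain ⟨p₁, p₂, ha, hp, hb, hproj⟩ := h
    exact ⟨p₁, p₂, ha, hp, hb, hproj.tail (cpersp_inf_right (hproj.le_of_le hp.le) c)⟩

theorem primeProjFrom_of_conOf_rel [Finite L] {a b u v : L} (hab : a ≤ b) (huv : u ⋖ v)
    (h : (LatCon.conOf a b).rel u v) : PrimeProjFrom a b u v := by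
  have hs := translationClosed_primeProjFrom a b
  have hchain_ab : ReflTransGen (PrimeProjFrom a b) a b :=
    ReflTransGen.mono (fun x y ⟨hax, hxy, hyb⟩ => ⟨x, y, hax, hxy, hyb, .refl⟩) _ _
      (reflTransGen_covBy_Icc hab)
  have hchain_uv : ReflTransGen (PrimeProjFrom a b) u v :=
    (hs.chainCon_rel_iff huv.le).1 (LatCon.conOf_le ((hs.chainCon_rel_iff hab).2 hchain_ab) h)
  exact rel_of_reflTransGen_of_covBy (fun _ _ => PrimeProjFrom.le) hchain_uv huv

end PrincipalCongruence

/-- **Lemma 1.** Let `L` be a finite lattice, `a ≤ b` in `L`, and let `q = [u, v]` be a prime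
interval. Then `q` is collapsed by `con(a, b)` iff `[a, b]` is congruence-projective to `q`;
moreover, in that case there is a prime interval `p = [p₁, p₂]` contained in `[a, b]` with
`p ⇛ q`. -/
theorem prime_interval_collapsed_iff_cproj
    {L : Type*} [Lattice L] [Finite L] {a b u v : L} (hab : a ≤ b) (huv : u ⋖ v) :
    ((LatCon.conOf a b).rel u v ↔ CProj (a, b) (u, v)) ∧
      ((LatCon.conOf a b).rel u v →
        ∃ p₁ p₂ : L, a ≤ p₁ ∧ p₁ ⋖ p₂ ∧ p₂ ≤ b ∧ CProj (p₁, p₂) (u, v)) := by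
  refine ⟨⟨fun h => ?_, fun h => (LatCon.conOf a b).rel_of_cproj h (LatCon.rel_conOf a b)⟩,
    primeProjFrom_of_conOf_rel hab huv⟩
  obtain ⟨p₁, p₂, ha, hp, hb, hproj⟩ := primeProjFrom_of_conOf_rel hab huv h
  exact (cproj_of_le_of_le_of_le ha hp.le hb).trans hproj

end ForkCongruence
end

section
/- Let L be a finite lattice and let δ be an equivalence relation on L all of whose equivalence classes are intervals of L. Then δ is a congruence of L if and only if both of the following hold: (C∨) whenever x is covered by two distinct elements y and z and x ≡ y (mod δ), then z ≡ y ⊔ z (mod δ); and (C∧) whenever x covers two distinct elements y and z and x ≡ y (mod δ), then z ≡ y ⊓ z (mod δ). -/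
namespace ForkCongruence

section TechnicalLemma

variable {L : Type*} [Lattice L] [Finite L]

/-- If `δ u v` and `u ≤ w ≤ v`, then `δ u w` (classes are intervals). -/
private lemma delta_between (δ : L → L → Prop) (hEq : Equivalence δ)
    (hInt : ∀ x : L, ∃ a b : L, {y : L | δ x y} = Set.Icc a b)
    {u v w : L} (huv : δ u v) (h1 : u ≤ w) (h2 : w ≤ v) : δ u w := by
  obtain ⟨p, q, hpq⟩ := hInt u
  have hu : u ∈ {y : L | δ u y} := hEq.refl u
  have hv : v ∈ {y : L | δ u y} := huv
  rw [hpq] at hu hv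
  have : w ∈ Set.Icc p q := ⟨hu.1.trans h1, h2.trans hv.2⟩
  rw [← hpq] at this
  exact this

private lemma delta_inf_sup (δ : L → L → Prop) (hEq : Equivalence δ)
    (hInt : ∀ x : L, ∃ a b : L, {y : L | δ x y} = Set.Icc a b)
    {a b : L} (hab : δ a b) : δ (a ⊓ b) (a ⊔ b) := by
  obtain ⟨p, q, hpq⟩ := hInt a
  have ha : a ∈ {y : L | δ a y} := hEq.refl a
  have hb : b ∈ {y : L | δ a y} := hab
  rw [hpq] at ha hb
  have h1 : a ⊓ b ∈ Set.Icc p q := ⟨le_inf ha.1 hb.1, inf_le_left.trans ha.2⟩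
  have h2 : a ⊔ b ∈ Set.Icc p q := ⟨ha.1.trans le_sup_left, sup_le ha.2 hb.2⟩
  rw [← hpq] at h1 h2
  exact hEq.trans (hEq.symm h1) h2

/-- Joining a collapsed interval with `c`, given the prime case. -/
private lemma chain_join (δ : L → L → Prop) (hEq : Equivalence δ)
    (hInt : ∀ x : L, ∃ a b : L, {y : L | δ x y} = Set.Icc a b)
    {u₀ v₀ c : L}
    (hP : ∀ x y : L, u₀ ≤ x → x ⋖ y → y ≤ v₀ → δ x y → δ (x ⊔ c) (y ⊔ c)) :
    ∀ K : ℕ, ∀ u v : L, u₀ ≤ u → u ≤ v → v ≤ v₀ → δ u v →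
      (Set.Icc u v).ncard ≤ K → δ (u ⊔ c) (v ⊔ c) := by
  intro K
  induction K with
  | zero =>
    intro u v _ huv _ _ hcard
    exfalso
    have : 0 < (Set.Icc u v).ncard :=
      (Set.ncard_pos (Set.toFinite _)).2 ⟨u, le_rfl, huv⟩
    omega
  | succ K ih =>
    intro u v hu0 huv hv0 hrel hcard
    rcases eq_or_lt_of_le huv with heq | hlt
    · subst heq; exact hEq.refl _
    · obtain ⟨y, huy, hyv⟩ := exists_covBy_le_of_lt hlt
      have h1 : δ u y := delta_between δ hEq hInt hrel huy.le hyv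
      have h2 : δ y v := hEq.trans (hEq.symm h1) hrel
      have h3 := hP u y hu0 huy (hyv.trans hv0) h1
      have hsub : Set.Icc y v ⊂ Set.Icc u v := by
        constructor
        · exact Set.Icc_subset_Icc huy.le le_rfl
        · intro hss
          exact absurd ((hss ⟨le_rfl, huv⟩).1) (not_le_of_gt huy.lt)
      have hlt' : (Set.Icc y v).ncard < (Set.Icc u v).ncard :=
        Set.ncard_lt_ncard hsub (Set.toFinite _)
      have h4 := ih y v (hu0.trans huy.le) hyv hv0 h2 (by omega)
      exact hEq.trans h3 h4

/-- Key lemma: for a collapsed prime quotient `a ⋖ b` and any `c ≥ a`, `δ c (b ⊔ c)`. -/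
private lemma prime_key (δ : L → L → Prop) (hEq : Equivalence δ)
    (hInt : ∀ x : L, ∃ a b : L, {y : L | δ x y} = Set.Icc a b)
    (hC : ∀ x y z : L, x ⋖ y → x ⋖ z → y ≠ z → δ x y → δ z (y ⊔ z)) :
    ∀ N M : ℕ, ∀ a b c : L, a ⋖ b → δ a b → a ≤ c →
      (Set.Icc a (b ⊔ c)).ncard ≤ N → (Set.Icc a c).ncard ≤ M → δ c (b ⊔ c) := by
  intro N
  induction N using Nat.strong_induction_on with
  | _ N ihN =>
    intro M
    induction M using Nat.strong_induction_on with
    | _ M ihM =>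
      intro a b c hab hd hac hN hM
      by_cases hbc : b ≤ c
      · rw [sup_eq_right.2 hbc]; exact hEq.refl c
      by_cases hca : c = a
      · subst hca; rw [sup_eq_left.2 hab.le]; exact hd
      have hlt : a < c := lt_of_le_of_ne hac (Ne.symm hca)
      obtain ⟨d, had, hdc⟩ := exists_le_covBy_of_lt hlt
      have hbd : ¬ b ≤ d := fun h => hbc (h.trans hdc.le)
      -- δ d (b ⊔ d) by the secondary induction
      have hsubM : Set.Icc a d ⊂ Set.Icc a c := by
        constructor
        · exact Set.Icc_subset_Icc le_rfl hdc.le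
        · intro hss
          exact absurd ((hss ⟨hac, le_rfl⟩).2) (not_le_of_gt hdc.lt)
      have hMlt : (Set.Icc a d).ncard < M :=
        lt_of_lt_of_le (Set.ncard_lt_ncard hsubM (Set.toFinite _)) hM
      have hNd : (Set.Icc a (b ⊔ d)).ncard ≤ N :=
        le_trans (Set.ncard_le_ncard
          (Set.Icc_subset_Icc le_rfl (sup_le_sup_left hdc.le b)) (Set.toFinite _)) hN
      have h5 : δ d (b ⊔ d) :=
        ihM _ hMlt a b d hab hd had hNd le_rfl
      by_cases hcbd : c ≤ b ⊔ d
      · -- c is inside the collapsed interval [d, b ⊔ d]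
        have h1 : δ d c := delta_between δ hEq hInt h5 hdc.le hcbd
        have h2 : δ c (b ⊔ d) := hEq.trans (hEq.symm h1) h5
        have heq : b ⊔ c = b ⊔ d :=
          le_antisymm (sup_le le_sup_left hcbd) (sup_le_sup_left hdc.le b)
        rw [heq]; exact h2
      · -- pick f with d ⋖ f ≤ b ⊔ d, use (C∨), then chain up from f ⊔ c
        have hdbd : d < b ⊔ d :=
          lt_of_le_of_ne le_sup_right (fun h => hbd (h ▸ le_sup_left))
        obtain ⟨f, hdf, hfbd⟩ := exists_covBy_le_of_lt hdbd
        have hdfr : δ d f := delta_between δ hEq hInt h5 hdf.le hfbd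
        have hfc : f ≠ c := fun h => hcbd (h ▸ hfbd)
        have h7 : δ c (f ⊔ c) := hC d f c hdf hdc hfc hdfr
        have h8 : δ f (b ⊔ d) := hEq.trans (hEq.symm hdfr) h5
        have hbdbc : b ⊔ d ≤ b ⊔ c := sup_le_sup_left hdc.le b
        -- prime case for the chain, via the primary induction
        have hP : ∀ x y : L, f ≤ x → x ⋖ y → y ≤ b ⊔ d → δ x y →
            δ (x ⊔ c) (y ⊔ c) := by
          intro x y hfx hxy hybd hxyr
          have hax : a < x := lt_of_le_of_lt had (lt_of_lt_of_le hdf.lt hfx)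
          have hyc : y ⊔ (x ⊔ c) = y ⊔ c := by
            rw [← sup_assoc, sup_eq_left.2 hxy.le]
          have hsubN : Set.Icc x (y ⊔ (x ⊔ c)) ⊂ Set.Icc a (b ⊔ c) := by
            constructor
            · apply Set.Icc_subset_Icc hax.le
              rw [hyc]
              exact sup_le (le_trans hybd hbdbc) le_sup_right
            · intro hss
              exact absurd ((hss ⟨le_rfl, hab.le.trans le_sup_left⟩).1) (not_le_of_gt hax)
          have hNlt : (Set.Icc x (y ⊔ (x ⊔ c))).ncard < N :=
            lt_of_lt_of_le (Set.ncard_lt_ncard hsubN (Set.toFinite _)) hN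
          have := ihN _ hNlt (Set.Icc x (x ⊔ c)).ncard x y (x ⊔ c) hxy hxyr
            le_sup_left le_rfl le_rfl
          rwa [hyc] at this
        have h11 := chain_join δ hEq hInt hP (Set.Icc f (b ⊔ d)).ncard f (b ⊔ d)
          le_rfl hfbd le_rfl h8 le_rfl
        have heq2 : (b ⊔ d) ⊔ c = b ⊔ c := by
          rw [sup_assoc, sup_eq_right.2 hdc.le]
        rw [heq2] at h11
        exact hEq.trans h7 h11

/-- Full join-compatibility. -/
private lemma join_compat (δ : L → L → Prop) (hEq : Equivalence δ)
    (hInt : ∀ x : L, ∃ a b : L, {y : L | δ x y} = Set.Icc a b)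
    (hC : ∀ x y z : L, x ⋖ y → x ⋖ z → y ≠ z → δ x y → δ z (y ⊔ z))
    (a b c : L) (hab : δ a b) : δ (a ⊔ c) (b ⊔ c) := by
  have hpq : δ (a ⊓ b) (a ⊔ b) := delta_inf_sup δ hEq hInt hab
  have hP : ∀ x y : L, a ⊓ b ≤ x → x ⋖ y → y ≤ a ⊔ b → δ x y →
      δ (x ⊔ c) (y ⊔ c) := by
    intro x y _ hxy _ hxyr
    have := prime_key δ hEq hInt hC (Set.Icc x (y ⊔ (x ⊔ c))).ncard
      (Set.Icc x (x ⊔ c)).ncard x y (x ⊔ c) hxy hxyr le_sup_left le_rfl le_rfl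
    rwa [← sup_assoc, sup_eq_left.2 hxy.le] at this
  have main := chain_join δ hEq hInt hP (Set.Icc (a ⊓ b) (a ⊔ b)).ncard
    (a ⊓ b) (a ⊔ b) le_rfl inf_le_sup le_rfl hpq le_rfl
  have h1 : δ ((a ⊓ b) ⊔ c) (a ⊔ c) := delta_between δ hEq hInt main
    (sup_le_sup_right inf_le_left c) (sup_le_sup_right le_sup_left c)
  have h2 : δ ((a ⊓ b) ⊔ c) (b ⊔ c) := delta_between δ hEq hInt main
    (sup_le_sup_right inf_le_right c) (sup_le_sup_right le_sup_right c)
  exact hEq.trans (hEq.symm h1) h2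

/-- Full meet-compatibility, by dualizing. -/
private lemma meet_compat (δ : L → L → Prop) (hEq : Equivalence δ)
    (hInt : ∀ x : L, ∃ a b : L, {y : L | δ x y} = Set.Icc a b)
    (hC : ∀ x y z : L, y ⋖ x → z ⋖ x → y ≠ z → δ x y → δ z (y ⊓ z))
    (a b c : L) (hab : δ a b) : δ (a ⊓ c) (b ⊓ c) := by
  haveI : Finite Lᵒᵈ := inferInstanceAs (Finite L)
  let δ' : Lᵒᵈ → Lᵒᵈ → Prop := fun x y => δ (OrderDual.ofDual x) (OrderDual.ofDual y)
  have hEq' : Equivalence δ' :=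
    ⟨fun x => hEq.refl _, fun h => hEq.symm h, fun h1 h2 => hEq.trans h1 h2⟩
  have hInt' : ∀ x : Lᵒᵈ, ∃ a b : Lᵒᵈ, {y : Lᵒᵈ | δ' x y} = Set.Icc a b := by
    intro x
    obtain ⟨p, q, hpq⟩ := hInt (OrderDual.ofDual x)
    refine ⟨OrderDual.toDual q, OrderDual.toDual p, ?_⟩
    ext y
    have := Set.ext_iff.1 hpq (OrderDual.ofDual y)
    simp only [Set.mem_setOf_eq, Set.mem_Icc] at this ⊢
    exact ⟨fun h => ⟨(this.1 h).2, (this.1 h).1⟩, fun h => this.2 ⟨h.2, h.1⟩⟩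
  have hC' : ∀ x y z : Lᵒᵈ, x ⋖ y → x ⋖ z → y ≠ z → δ' x y → δ' z (y ⊔ z) := by
    intro x y z hxy hxz hne h
    exact hC (OrderDual.ofDual x) (OrderDual.ofDual y) (OrderDual.ofDual z)
      hxy.ofDual hxz.ofDual (fun he => hne (OrderDual.ofDual.injective he)) h
  exact join_compat δ' hEq' hInt' hC'
    (OrderDual.toDual a) (OrderDual.toDual b) (OrderDual.toDual c) hab

end TechnicalLemma

/-- **Lemma 2 (technical lemma).** Let `L` be a finite lattice and `δ` an equivalence relation
on `L` all of whose classes are intervals. Then `δ` is a congruence iff both `(C∨)` and its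
dual `(C∧)` hold. -/
theorem equivalence_is_congruence_iff_cover_conditions
    {L : Type*} [Lattice L] [Finite L] (δ : L → L → Prop) (hEq : Equivalence δ)
    (hInt : ∀ x : L, ∃ a b : L, {y : L | δ x y} = Set.Icc a b) :
    (∃ θ : LatCon L, θ.rel = δ) ↔
      ((∀ x y z : L, x ⋖ y → x ⋖ z → y ≠ z → δ x y → δ z (y ⊔ z)) ∧
       (∀ x y z : L, y ⋖ x → z ⋖ x → y ≠ z → δ x y → δ z (y ⊓ z))) := by
  constructor
  · rintro ⟨θ, rfl⟩
    constructor
    · intro x y z hxy hxz hne h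
      have := θ.sup_comp h (θ.refl z)
      rwa [sup_eq_right.2 hxz.le] at this
    · intro x y z hyx hzx hne h
      have := θ.inf_comp h (θ.refl z)
      rwa [inf_eq_right.2 hzx.le] at this
  · rintro ⟨hCj, hCm⟩
    refine ⟨⟨δ, hEq.refl, fun h => hEq.symm h, fun h1 h2 => hEq.trans h1 h2, ?_, ?_⟩, rfl⟩
    · intro a b c d h1 h2
      have j1 := join_compat δ hEq hInt hCj a b c h1
      have j2 := join_compat δ hEq hInt hCj c d b h2
      rw [sup_comm c b, sup_comm d b] at j2
      exact hEq.trans j1 j2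
    · intro a b c d h1 h2
      have j1 := meet_compat δ hEq hInt hCm a b c h1
      have j2 := meet_compat δ hEq hInt hCm c d b h2
      rw [inf_comm c b, inf_comm d b] at j2
      exact hEq.trans j1 j2


end ForkCongruence
end

section
/- Let L be a finite lattice and K a finite lattice containing L as a sublattice, and assume that every congruence of L extends to K. Then K is a congruence-preserving extension of L if and only if for every prime interval p of K that is not an interval of L there exists a prime interval q of L such that con_K(p) = con_K(q). -/
namespace ForkCongruence

/-!
In a finite lattice a congruence is determined by the prime intervals it collapses, since it
collapses `[a, b]` as soon as it collapses every prime interval of a maximal chain from `a` to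
`b`. Hence, when every prime interval of `K` outside `L` generates the same congruence as one of
`L`, a congruence of `K` is determined by its restriction to `L`. Conversely, if restriction is
injective then `con_K(u, v)` is the congruence generated by the prime intervals of `L` it
collapses, because both have the same restriction. A join of congruences is the transitive
closure of their union, and projecting such a chain from `u` to `v` into the two-element interval
`[u, v]` by `x ↦ (x ⊔ u) ⊓ v` shows that one of these prime intervals already generates
`con_K(u, v)`.
-/

theorem _root_.Relation.ReflTransGen.exists_rel_of_not {α : Type*} {r : α → α → Prop}
    {p : α → Prop} {a b : α} (h : Relation.ReflTransGen r a b) (ha : p a) (hb : ¬ p b) :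
    ∃ x y, r x y ∧ p x ∧ ¬ p y := by
  induction h with
  | refl => exact absurd ha hb
  | @tail c d _ hcd ih =>
    by_cases hc : p c
    · exact ⟨c, d, hcd, hc, hb⟩
    · exact ih hc

namespace LatCon

variable {K : Type*} [Lattice K]

lemma rel_gen_of {s : K → K → Prop} {a b : K} (h : s a b) : (gen s).rel a b :=
  fun _ hs => hs a b h

lemma gen_le {s : K → K → Prop} {θ : LatCon K} (h : ∀ a b, s a b → θ.rel a b) : gen s ≤ θ :=
  fun _ _ hxy => hxy θ h

lemma rel_conOf_s6 (a b : K) : (conOf a b).rel a b := rel_gen_of ⟨rfl, rfl⟩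

lemma conOf_le_iff {a b : K} {θ : LatCon K} : conOf a b ≤ θ ↔ θ.rel a b :=
  ⟨fun h => h (rel_conOf_s6 a b), fun h => gen_le fun _ _ ⟨hx, hy⟩ => hx ▸ hy ▸ h⟩

lemma rel_of_le_of_le {θ : LatCon K} {a b x y : K} (h : θ.rel a b)
    (hax : a ≤ x) (hxy : x ≤ y) (hyb : y ≤ b) : θ.rel x y := by
  have h₁ : θ.rel (a ⊔ x) (b ⊔ x) := θ.sup_comp h (θ.refl x)
  rw [sup_eq_right.mpr hax, sup_eq_left.mpr (hxy.trans hyb)] at h₁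
  have h₂ : θ.rel (x ⊓ y) (b ⊓ y) := θ.inf_comp h₁ (θ.refl y)
  rwa [inf_eq_left.mpr hxy, inf_eq_right.mpr hyb] at h₂

lemma rel_inf_sup_iff {θ : LatCon K} {a b : K} : θ.rel (a ⊓ b) (a ⊔ b) ↔ θ.rel a b := by
  constructor
  · intro h
    exact θ.trans (rel_of_le_of_le h inf_le_left le_sup_left le_rfl)
      (θ.symm (rel_of_le_of_le h inf_le_right le_sup_right le_rfl))
  · intro h
    have h₁ := θ.inf_comp h (θ.refl b)
    have h₂ := θ.sup_comp h (θ.refl b)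
    rw [inf_idem] at h₁
    rw [sup_idem] at h₂
    exact θ.trans h₁ (θ.symm h₂)

lemma rel_of_forall_covBy [Finite K] {θ : LatCon K} {a b : K} (hab : a ≤ b)
    (h : ∀ x y : K, a ≤ x → x ⋖ y → y ≤ b → θ.rel x y) : θ.rel a b := by
  suffices H : ∀ c : K, a ≤ c → c ≤ b → θ.rel c b from H a le_rfl hab
  intro c
  induction c using WellFoundedGT.induction with
  | _ c ih =>
    intro hac hcb
    rcases hcb.eq_or_lt with rfl | hlt
    · exact θ.refl c
    · obtain ⟨d, hcd, hdb⟩ := exists_covBy_le_of_lt hlt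
      exact θ.trans (h c d hac hcd hdb) (ih d hcd.lt (hac.trans hcd.le) hdb)

lemma le_of_forall_covBy [Finite K] {θ ψ : LatCon K}
    (h : ∀ x y : K, x ⋖ y → θ.rel x y → ψ.rel x y) : θ ≤ ψ := by
  intro a b hab
  rw [← rel_inf_sup_iff] at hab ⊢
  exact rel_of_forall_covBy inf_le_sup fun x y hx hxy hy =>
    h x y hxy (rel_of_le_of_le hab hx hxy.le hy)

-- Compatibility is checked one argument at a time: `a ⊔ c ~ b ⊔ c ~ b ⊔ d`.
def ofReflTransGen (R : K → K → Prop) (symm : ∀ {x y}, R x y → R y x)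
    (sup_right : ∀ {x y} c, R x y → R (x ⊔ c) (y ⊔ c))
    (inf_right : ∀ {x y} c, R x y → R (x ⊓ c) (y ⊓ c)) : LatCon K where
  rel := Relation.ReflTransGen R
  refl _ := .refl
  symm h := (@Relation.ReflTransGen.stdSymm _ R ⟨fun _ _ => symm⟩).symm _ _ h
  trans h₁ h₂ := h₁.trans h₂
  sup_comp {a b c d} h₁ h₂ := by
    refine (h₁.lift (· ⊔ c) fun _ _ => sup_right c).trans ?_
    simpa only [sup_comm b] using h₂.lift (· ⊔ b) fun _ _ => sup_right b
  inf_comp {a b c d} h₁ h₂ := by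
    refine (h₁.lift (· ⊓ c) fun _ _ => inf_right c).trans ?_
    simpa only [inf_comm b] using h₂.lift (· ⊓ b) fun _ _ => inf_right b

lemma exists_conOf_rel_of_gen_rel {s : K → K → Prop} {u v : K} (huv : u ⋖ v)
    (h : (gen s).rel u v) : ∃ a b, s a b ∧ (conOf a b).rel u v := by
  let R : K → K → Prop := fun x y => ∃ a b, s a b ∧ (conOf a b).rel x y
  let T : LatCon K := ofReflTransGen R
    (fun ⟨a, b, hs, hr⟩ => ⟨a, b, hs, (conOf a b).symm hr⟩)
    (fun c ⟨a, b, hs, hr⟩ => ⟨a, b, hs, (conOf a b).sup_comp hr ((conOf a b).refl c)⟩)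
    (fun c ⟨a, b, hs, hr⟩ => ⟨a, b, hs, (conOf a b).inf_comp hr ((conOf a b).refl c)⟩)
  have hT : Relation.ReflTransGen R u v := h T fun a b hab => .single ⟨a, b, hab, rel_conOf_s6 a b⟩
  obtain ⟨x, y, ⟨a, b, hs, hxy⟩, hx, hy⟩ := hT.exists_rel_of_not (p := fun x => (x ⊔ u) ⊓ v = u)
    (by simp [huv.le]) (by simpa [huv.le] using huv.ne')
  have hy' : (y ⊔ u) ⊓ v = v :=
    (huv.eq_or_eq (le_inf le_sup_right huv.le) inf_le_right).resolve_left hy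
  have hproj := (conOf a b).inf_comp ((conOf a b).sup_comp hxy ((conOf a b).refl u))
    ((conOf a b).refl v)
  rw [hx, hy'] at hproj
  exact ⟨a, b, hs, hproj⟩

end LatCon

open LatCon

def PrimeIntervalsConInSublattice {K : Type*} [Lattice K] (L : Sublattice K) : Prop :=
  ∀ u v : K, u ⋖ v → ¬ (u ∈ L ∧ v ∈ L) →
    ∃ u' v' : L, u' ⋖ v' ∧ conOf u v = conOf (u' : K) (v' : K)

section

variable {K : Type*} [Lattice K] [Finite K] {L : Sublattice K}

lemma le_of_restrict_le (hL : PrimeIntervalsConInSublattice L) {θ ψ : LatCon K}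
    (h : θ.restrict L ≤ ψ.restrict L) : θ ≤ ψ := by
  refine le_of_forall_covBy fun p q hpq hθ => ?_
  by_cases hmem : p ∈ L ∧ q ∈ L
  · exact h (x := ⟨p, hmem.1⟩) (y := ⟨q, hmem.2⟩) hθ
  · obtain ⟨u', v', -, hcon⟩ := hL p q hpq hmem
    rw [← conOf_le_iff, hcon, conOf_le_iff] at hθ ⊢
    exact h hθ

lemma restrict_injective_iff :
    Function.Injective (fun θ : LatCon K => θ.restrict L) ↔ PrimeIntervalsConInSublattice L := by
  refine ⟨fun hinj u v huv _ => ?_, fun hL θ ψ h => ?_⟩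
  · let θ := conOf u v
    let Φ : LatCon K := gen fun x y => ∃ (hx : x ∈ L) (hy : y ∈ L),
      (⟨x, hx⟩ : L) ⋖ ⟨y, hy⟩ ∧ θ.rel x y
    have hΦθ : Φ ≤ θ := gen_le fun _ _ ⟨_, _, _, hr⟩ => hr
    have hΦ : Φ = θ := hinj <| le_antisymm (fun _ _ h => hΦθ h) <|
      le_of_forall_covBy fun x y hxy hθ => rel_gen_of ⟨x.2, y.2, hxy, hθ⟩
    have hΦuv : Φ.rel u v := by rw [hΦ]; exact rel_conOf_s6 u v
    obtain ⟨a, b, ⟨ha, hb, hab, hθab⟩, huv'⟩ := exists_conOf_rel_of_gen_rel huv hΦuv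
    exact ⟨⟨a, ha⟩, ⟨b, hb⟩, hab, le_antisymm (conOf_le_iff.2 huv') (conOf_le_iff.2 hθab)⟩
  · exact le_antisymm (le_of_restrict_le hL h.le) (le_of_restrict_le hL h.ge)

end

/-- **Lemma 3 (variant of Lemmas 245 and 246 of [LTF]).** Let `L` be a sublattice of a finite
lattice `K` such that every congruence of `L` extends to `K`. Then `K` is a
congruence-preserving extension of `L` iff for every prime interval `[u, v]` of `K` not in `L`
there is a prime interval `[u', v']` of `L` with `con_K(u, v) = con_K(u', v')`. -/
theorem congruence_preserving_iff_prime_intervals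
    {K : Type*} [Lattice K] [Finite K] (L : Sublattice K)
    (hext : ∀ α : LatCon L, ∃ θ : LatCon K, θ.restrict L = α) :
    IsCongPresExt L ↔
      ∀ u v : K, u ⋖ v → ¬ (u ∈ L ∧ v ∈ L) →
        ∃ u' v' : L, u' ⋖ v' ∧
          LatCon.conOf u v = LatCon.conOf (u' : K) (v' : K) :=
  ⟨fun h => restrict_injective_iff.1 h.1, fun h => ⟨restrict_injective_iff.2 h, hext⟩⟩

end ForkCongruence
end

section
/- Every element of an SPS lattice has at most two covers; that is, for every element a of an SPS lattice L, there are at most two elements of L covering a. -/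
/-!
Every upper cover `c` of `a` contains a join-irreducible element `u_c ≰ a`: take a minimal
element below `c` that is not below `a`. Two distinct covers meet in `a`, so `u_c ≤ u_d`
would force `u_c ≤ c ⊓ d = a`; hence the witnesses of distinct covers are incomparable, and
three covers would give a three-element antichain of join-irreducibles.
-/

namespace ForkCongruence

section Lattice

variable {α : Type*} [Lattice α]

theorem supIrred_of_minimal_not_le {b u : α} (hu : Minimal (¬ · ≤ b) u) : SupIrred u := by
  refine ⟨fun hmin => hu.prop ((hmin inf_le_left).trans inf_le_right), fun c d hcd => ?_⟩
  by_contra! hne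
  have below : ∀ e, e ≤ u → e ≠ u → e ≤ b := fun e heu hne =>
    not_not.1 (hu.not_prop_of_lt (lt_of_le_of_ne heu hne))
  exact hu.prop (hcd ▸ sup_le (below c (hcd ▸ le_sup_left) hne.1)
    (below d (hcd ▸ le_sup_right) hne.2))

theorem exists_supIrred_le_not_le [WellFoundedLT α] {x b : α} (h : ¬ x ≤ b) :
    ∃ u, SupIrred u ∧ u ≤ x ∧ ¬ u ≤ b := by
  obtain ⟨u, hux, hu⟩ := exists_minimal_le_of_wellFoundedLT (¬ · ≤ b) x h
  exact ⟨u, supIrred_of_minimal_not_le hu, hux, hu.prop⟩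

theorem not_le_of_covBy_of_covBy {a x y u v : α} (hx : a ⋖ x) (hy : a ⋖ y) (hxy : x ≠ y)
    (hux : u ≤ x) (hua : ¬ u ≤ a) (hvy : v ≤ y) : ¬ u ≤ v := fun huv =>
  hua ((le_inf hux (huv.trans hvy)).trans (hx.wcovBy.inf_eq hy.wcovBy hxy).le)

end Lattice

/-- **Lemma 4(i).** Every element of an SPS lattice has at most two covers. -/
theorem sps_at_most_two_covers
    {L : Type*} [Lattice L] [Finite L] (hL : IsSPS L) (a : L) :
    ∀ x y z : L, a ⋖ x → a ⋖ y → a ⋖ z → x = y ∨ x = z ∨ y = z := by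
  intro x y z hx hy hz
  by_contra! hne
  obtain ⟨hxy, hxz, hyz⟩ := hne
  obtain ⟨u, hu, hux, hua⟩ := exists_supIrred_le_not_le hx.lt.not_ge
  obtain ⟨v, hv, hvy, hva⟩ := exists_supIrred_le_not_le hy.lt.not_ge
  obtain ⟨w, hw, hwz, hwa⟩ := exists_supIrred_le_not_le hz.lt.not_ge
  exact hL.2 ⟨u, v, w, hu, hv, hw,
    not_le_of_covBy_of_covBy hx hy hxy hux hua hvy,
    not_le_of_covBy_of_covBy hy hx hxy.symm hvy hva hux,
    not_le_of_covBy_of_covBy hx hz hxz hux hua hwz,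
    not_le_of_covBy_of_covBy hz hx hxz.symm hwz hwa hux,
    not_le_of_covBy_of_covBy hy hz hyz hvy hva hwz,
    not_le_of_covBy_of_covBy hz hy hyz.symm hwz hwa hvy⟩

end ForkCongruence
end

section
/- Let L be an SPS lattice and let a ∈ L cover three distinct elements x_1, x_2, x_3. Then the sublattice of L generated by {x_1, x_2, x_3} is isomorphic to S7. -/
namespace ForkCongruence

/-- The seven elements `o, zl, zr, t, al, ar, i` form a sublattice isomorphic to `S7`
(with `o ⋖ zl ⋖ al ⋖ i`, `o ⋖ zr ⋖ ar ⋖ i`, `zl ⋖ t ⋖ i`, `zr ⋖ t` as internal coverings). -/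
def IsS7 {K : Type*} [Lattice K] (o zl zr t al ar i : K) : Prop :=
  zl ⊓ zr = o ∧ zl ⊔ zr = t ∧ al ⊓ ar = o ∧ al ⊔ ar = i ∧
  t ⊓ al = zl ∧ t ⊓ ar = zr ∧ t ⊔ al = i ∧ t ⊔ ar = i ∧
  zl ⊔ ar = i ∧ zr ⊔ al = i ∧ zl ⊓ ar = o ∧ zr ⊓ al = o ∧
  o < zl ∧ o < zr ∧ zl < al ∧ zr < ar ∧ zl < t ∧ zr < t ∧ t < i ∧ al < i ∧ ar < i

/-!
By slimness, one of the three covers, say `t`, has every join-irreducible element below it lying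
below one of the other two covers `x` and `y`: otherwise three join-irreducibles, each escaping
the other two covers, would form an antichain. In a finite lattice every element is the join of
the join-irreducibles below it, so `t = (t ⊓ x) ⊔ (t ⊓ y)`; a second antichain argument gives
`x ⊓ y ≤ t`. Together with `t ⊔ x = t ⊔ y = x ⊔ y = a`, these identities make
`x ⊓ y, t ⊓ x, t ⊓ y, t, x, y, a` a copy of `S7`, and this set is generated by `t, x, y`.
-/

end ForkCongruence

theorem CovBy.not_le_of_ne {α : Type*} [PartialOrder α] {a b c : α} (ha : a ⋖ c)
    (hb : b ⋖ c) (hab : a ≠ b) : ¬a ≤ b := fun h =>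
  hab (h.eq_of_not_lt fun hlt => ha.2 hlt hb.lt)

section Finite

variable {α : Type*} [Lattice α] [Finite α]

theorem le_of_forall_supIrred_le {x y : α} (h : ∀ p, SupIrred p → p ≤ x → p ≤ y) : x ≤ y := by
  induction x using WellFoundedLT.induction with
  | _ x ih =>
    by_cases hx : SupIrred x
    · exact h x hx le_rfl
    · obtain hmin | ⟨b, c, rfl, hb, hc⟩ := not_supIrred.1 hx
      · exact (hmin (inf_le_left (b := y))).trans inf_le_right
      · exact sup_le (ih b hb fun p hp hpb => h p hp (hpb.trans le_sup_left))
          (ih c hc fun p hp hpc => h p hp (hpc.trans le_sup_right))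

theorem exists_supIrred_le_and_not_le {x y : α} (h : ¬x ≤ y) :
    ∃ p, SupIrred p ∧ p ≤ x ∧ ¬p ≤ y := by
  by_contra! hc
  exact h (le_of_forall_supIrred_le hc)

theorem inf_sup_inf_eq_of_forall_supIrred_le_or_le {t x y : α}
    (h : ∀ p, SupIrred p → p ≤ t → p ≤ x ∨ p ≤ y) : t ⊓ x ⊔ t ⊓ y = t :=
  (sup_le inf_le_left inf_le_left).antisymm <| le_of_forall_supIrred_le fun p hp hpt =>
    (h p hp hpt).elim (fun hpx => le_sup_of_le_left (le_inf hpt hpx))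
      (fun hpy => le_sup_of_le_right (le_inf hpt hpy))

end Finite

namespace ForkCongruence

section

variable {α : Type*} [Lattice α]

theorem isS7_of_sup_eq {t x y a : α} (htx : ¬t ≤ x) (hty : ¬t ≤ y) (hxt : ¬x ≤ t)
    (hyt : ¬y ≤ t) (hxy : x ⊔ y = a) (htxa : t ⊔ x = a) (htya : t ⊔ y = a)
    (hsplit : t ⊓ x ⊔ t ⊓ y = t) (hinf : x ⊓ y ≤ t) :
    IsS7 (x ⊓ y) (t ⊓ x) (t ⊓ y) t x y a := by
  have hzly : ¬t ⊓ x ≤ y := fun h => hty (hsplit ▸ sup_le h inf_le_right)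
  have hzrx : ¬t ⊓ y ≤ x := fun h => htx (hsplit ▸ sup_le inf_le_right h)
  have hxyt : t ⊓ (x ⊓ y) = x ⊓ y := inf_eq_right.2 hinf
  refine ⟨by rw [← inf_inf_distrib_left, hxyt], hsplit, rfl, hxy, rfl, rfl, htxa, htya, ?_, ?_,
    by rw [inf_assoc, hxyt], by rw [inf_assoc, inf_comm y, hxyt],
    (le_inf hinf inf_le_left).lt_of_ne fun h => hzly (h ▸ inf_le_right),
    (le_inf hinf inf_le_right).lt_of_ne fun h => hzrx (h ▸ inf_le_left),
    inf_lt_right.2 hxt, inf_lt_right.2 hyt, inf_lt_left.2 htx, inf_lt_left.2 hty,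
    htxa ▸ left_lt_sup.2 hxt, htxa ▸ right_lt_sup.2 htx, htya ▸ right_lt_sup.2 hty⟩
  · calc t ⊓ x ⊔ y = t ⊓ x ⊔ (t ⊓ y ⊔ y) := by rw [sup_of_le_right (inf_le_right : t ⊓ y ≤ y)]
      _ = a := by rw [← sup_assoc, hsplit, htya]
  · calc t ⊓ y ⊔ x = t ⊓ y ⊔ (t ⊓ x ⊔ x) := by rw [sup_of_le_right (inf_le_right : t ⊓ x ≤ x)]
      _ = a := by rw [← sup_assoc, sup_comm (t ⊓ y), hsplit, htxa]

theorem IsS7.isSublattice {o zl zr t al ar i : α} (h : IsS7 o zl zr t al ar i) :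
    IsSublattice ({o, zl, zr, t, al, ar, i} : Set α) := by
  obtain ⟨_, _, _, _, _, _, _, _, _, _, _, _, hozl, hozr, hzlal, hzrar, hzlt, hzrt, hti, hali,
    hari⟩ := h
  constructor <;>
  simp only [SupClosed, InfClosed, Set.forall_mem_insert, Set.mem_singleton_iff, forall_eq] <;>
  simp [*, hozl.le, hozr.le, hzlal.le, hzrar.le, hzlt.le, hzrt.le, hti.le, hali.le, hari.le,
    (hozl.trans hzlt).le, (hozl.trans hzlal).le, (hozr.trans hzrar).le,
    (hozl.trans <| hzlt.trans hti).le, (hzlt.trans hti).le, (hzrt.trans hti).le, sup_comm, inf_comm]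

theorem IsS7.latticeClosure_eq {o zl zr t al ar i : α} (h : IsS7 o zl zr t al ar i) :
    latticeClosure {t, al, ar} = {o, zl, zr, t, al, ar, i} := by
  refine (latticeClosure_min ?_ h.isSublattice).antisymm ?_
  · simp [Set.insert_subset_iff]
  · obtain ⟨-, -, ho, hi, hzl, hzr, -⟩ := h
    have hc := isSublattice_latticeClosure (s := ({t, al, ar} : Set α))
    have ht : t ∈ latticeClosure {t, al, ar} := subset_latticeClosure (by simp)
    have hal : al ∈ latticeClosure {t, al, ar} := subset_latticeClosure (by simp)
    have har : ar ∈ latticeClosure {t, al, ar} := subset_latticeClosure (by simp)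
    rw [← ho, ← hi, ← hzl, ← hzr]
    simp only [Set.insert_subset_iff, Set.singleton_subset_iff]
    exact ⟨hc.2 hal har, hc.2 ht hal, hc.2 ht har, ht, hal, har, hc.1 hal har⟩

namespace IsSlim

theorem false_of_supIrred_separated (hα : IsSlim α) {p q r x y z : α}
    (hp : SupIrred p) (hq : SupIrred q) (hr : SupIrred r) (hpx : p ≤ x) (hqy : q ≤ y)
    (hrz : r ≤ z) (hpy : ¬p ≤ y) (hpz : ¬p ≤ z) (hqx : ¬q ≤ x) (hqz : ¬q ≤ z) (hrx : ¬r ≤ x)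
    (hry : ¬r ≤ y) : False :=
  hα ⟨p, q, r, hp, hq, hr, fun h => hpy (h.trans hqy), fun h => hqx (h.trans hpx),
    fun h => hpz (h.trans hrz), fun h => hrx (h.trans hpx), fun h => hqz (h.trans hrz),
    fun h => hry (h.trans hqy)⟩

theorem forall_supIrred_le_or_le (hα : IsSlim α) (x y z : α) :
    (∀ p, SupIrred p → p ≤ x → p ≤ y ∨ p ≤ z) ∨ (∀ p, SupIrred p → p ≤ y → p ≤ x ∨ p ≤ z) ∨
      ∀ p, SupIrred p → p ≤ z → p ≤ x ∨ p ≤ y := by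
  by_contra! ⟨⟨p, hp, hpx, hpy, hpz⟩, ⟨q, hq, hqy, hqx, hqz⟩, ⟨r, hr, hrz, hrx, hry⟩⟩
  exact hα.false_of_supIrred_separated hp hq hr hpx hqy hrz hpy hpz hqx hqz hrx hry

theorem inf_le_of_forall_supIrred_le_or_le [Finite α] (hα : IsSlim α) {t x y : α}
    (htx : ¬t ≤ x) (hty : ¬t ≤ y) (h : ∀ p, SupIrred p → p ≤ t → p ≤ x ∨ p ≤ y) :
    x ⊓ y ≤ t := by
  by_contra hxyt
  obtain ⟨p, hp, hpxy, hpt⟩ := exists_supIrred_le_and_not_le hxyt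
  obtain ⟨pl, hpl, hplt, hply⟩ := exists_supIrred_le_and_not_le hty
  obtain ⟨pr, hpr, hprt, hprx⟩ := exists_supIrred_le_and_not_le htx
  have hplx : pl ≤ x := (h pl hpl hplt).resolve_right hply
  have hpry : pr ≤ y := (h pr hpr hprt).resolve_left hprx
  exact hα.false_of_supIrred_separated hp hpl hpr hpxy (le_inf hplt hplx) (le_inf hprt hpry)
    (fun h => hpt (h.trans inf_le_left)) (fun h => hpt (h.trans inf_le_left))
    (fun h => hply (h.trans inf_le_right)) (fun h => hply (h.trans inf_le_right))
    (fun h => hprx (h.trans inf_le_left)) (fun h => hprx (h.trans inf_le_right))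

theorem isS7_of_covBy [Finite α] (hα : IsSlim α) {t x y a : α} (ht : t ⋖ a) (hx : x ⋖ a)
    (hy : y ⋖ a) (htx : t ≠ x) (hty : t ≠ y) (hxy : x ≠ y)
    (h : ∀ p, SupIrred p → p ≤ t → p ≤ x ∨ p ≤ y) :
    IsS7 (x ⊓ y) (t ⊓ x) (t ⊓ y) t x y a :=
  have htx' := ht.not_le_of_ne hx htx
  have hty' := ht.not_le_of_ne hy hty
  isS7_of_sup_eq htx' hty' (hx.not_le_of_ne ht htx.symm) (hy.not_le_of_ne ht hty.symm)
    (hx.wcovBy.sup_eq hy.wcovBy hxy) (ht.wcovBy.sup_eq hx.wcovBy htx)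
    (ht.wcovBy.sup_eq hy.wcovBy hty) (inf_sup_inf_eq_of_forall_supIrred_le_or_le h)
    (hα.inf_le_of_forall_supIrred_le_or_le htx' hty' h)

end IsSlim

end

/-- **Lemma 4(ii).** Let `L` be an SPS lattice and let `a ∈ L` cover three distinct elements
`x₁, x₂, x₃`. Then the sublattice of `L` generated by `{x₁, x₂, x₃}` is (isomorphic to) `S7`. -/
theorem three_covers_generate_S7
    {L : Type*} [Lattice L] [Finite L] (hL : IsSPS L) (a x₁ x₂ x₃ : L)
    (h₁ : x₁ ⋖ a) (h₂ : x₂ ⋖ a) (h₃ : x₃ ⋖ a)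
    (h₁₂ : x₁ ≠ x₂) (h₁₃ : x₁ ≠ x₃) (h₂₃ : x₂ ≠ x₃) :
    ∃ o zl zr t al ar i : L, IsS7 o zl zr t al ar i ∧
      latticeClosure {x₁, x₂, x₃} = {o, zl, zr, t, al, ar, i} := by
  have generate {t x y : L} (ht : t ⋖ a) (hx : x ⋖ a) (hy : y ⋖ a) (htx : t ≠ x) (hty : t ≠ y)
      (hxy : x ≠ y) (h : ∀ p, SupIrred p → p ≤ t → p ≤ x ∨ p ≤ y) :
      ∃ o zl zr t' al ar i : L, IsS7 o zl zr t' al ar i ∧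
        latticeClosure {t, x, y} = {o, zl, zr, t', al, ar, i} :=
    have hS7 := hL.2.isS7_of_covBy ht hx hy htx hty hxy h
    ⟨_, _, _, _, _, _, _, hS7, hS7.latticeClosure_eq⟩
  rcases hL.2.forall_supIrred_le_or_le x₁ x₂ x₃ with H | H | H
  · exact generate h₁ h₂ h₃ h₁₂ h₁₃ h₂₃ H
  · rw [Set.insert_comm]
    exact generate h₂ h₁ h₃ h₁₂.symm h₂₃ h₁₃ H
  · rw [Set.pair_comm x₂, Set.insert_comm x₁]
    exact generate h₃ h₁ h₂ h₁₃.symm h₂₃.symm h₁₂ H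

end ForkCongruence
end
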